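/- Let p be a prime and F a finite field with Fintype.card F = p^2 and CharP F p, let α ∈ F generate the unit group Fˣ, and let f : F → ZMod (p^2 − 1) satisfy α ^ (f x).val = x for all nonzero x ∈ F. Let x₁, x₂ ∈ ZMod p satisfy x₁ * x₂ ≠ 1. Then the function g : ZMod p × ZMod p → ZMod (p^2 − 1) given by g (i, j) = f (((i + x₂ * j : ZMod p) : F) * α + ((j + x₁ * i : ZMod p) : F)) has the periodic Costas property, where (· : F) denotes the canonical ring map ZMod p → F. -/

import Mathlib

/-- The periodic Costas (distinct difference) property for a three-dimensional
array `g : ℤ_p × ℤ_p → ℤ_{p^2 - 1}`. -/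
def PeriodicCostas2 (p n : ℕ) (g : ZMod p × ZMod p → ZMod n) : Prop :=
  ∀ h : ZMod p × ZMod p, h ≠ 0 → ∀ a b : ZMod p × ZMod p,
    a ≠ 0 → b ≠ 0 → a + h ≠ 0 → b + h ≠ 0 →
    g (a + h) - g a = g (b + h) - g b → a = b

/-!
The shear is invertible because its determinant is `1 - x₁ x₂`, and `(i, j) ↦ i α + j` is
injective because `α`, a generator of `Fˣ`, does not lie in the prime field. So `g` is the
discrete logarithm composed with an injective additive map `φ : ℤ_p × ℤ_p → F`, and it suffices
to run Welch's argument in `F`: if `log (x + c) - log x = log (y + c) - log y = d`, then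
`x + c = α^d x` and `y + c = α^d y`, whence `c (y - x) = 0`.
-/

theorem pow_val_add_of_pow_eq_one {M : Type*} [Monoid M] {n : ℕ} [NeZero n] {α : M}
    (hαn : α ^ n = 1) (u v : ZMod n) : α ^ (u + v).val = α ^ u.val * α ^ v.val := by
  rw [ZMod.val_add, ← pow_eq_pow_mod _ hαn, pow_add]

section DiscreteLog

variable {F : Type*} [Field F] {n : ℕ} [NeZero n] {α : F} {f : F → ZMod n}

theorem pow_val_sub_mul_of_dlog (hαn : α ^ n = 1) (hf : ∀ y : F, y ≠ 0 → α ^ (f y).val = y)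
    {x y : F} (hx : x ≠ 0) (hy : y ≠ 0) : α ^ (f x - f y).val * y = x := by
  calc α ^ (f x - f y).val * y = α ^ (f x - f y).val * α ^ (f y).val := by rw [hf y hy]
    _ = x := by rw [← pow_val_add_of_pow_eq_one hαn, sub_add_cancel, hf x hx]

theorem eq_of_dlog_add_sub_dlog_eq (hαn : α ^ n = 1) (hf : ∀ y : F, y ≠ 0 → α ^ (f y).val = y)
    {c x y : F} (hc : c ≠ 0) (hx : x ≠ 0) (hy : y ≠ 0) (hxc : x + c ≠ 0) (hyc : y + c ≠ 0)
    (h : f (x + c) - f x = f (y + c) - f y) : x = y := by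
  have ex := pow_val_sub_mul_of_dlog hαn hf hxc hx
  have ey := pow_val_sub_mul_of_dlog hαn hf hyc hy
  rw [h] at ex
  have hcy : c * (y - x) = 0 := by linear_combination x * ey - y * ex
  exact (sub_eq_zero.mp ((mul_eq_zero.mp hcy).resolve_left hc)).symm

theorem periodicCostas2_dlog_comp (hαn : α ^ n = 1) (hf : ∀ y : F, y ≠ 0 → α ^ (f y).val = y)
    {p : ℕ} (φ : ZMod p × ZMod p →+ F) (hφ : Function.Injective φ) :
    PeriodicCostas2 p n (f ∘ φ) := by
  have hφ0 : ∀ {u}, u ≠ 0 → φ u ≠ 0 := fun hu => (map_ne_zero_iff φ hφ).mpr hu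
  intro h hh a b ha hb hah hbh hab
  simp only [Function.comp_apply, map_add] at hab
  refine hφ (eq_of_dlog_add_sub_dlog_eq hαn hf (hφ0 hh) (hφ0 ha) (hφ0 hb) ?_ ?_ hab)
  · simpa only [map_add] using hφ0 hah
  · simpa only [map_add] using hφ0 hbh

end DiscreteLog

def shearG2 {R : Type*} [CommRing R] (x₁ x₂ : R) : R × R →+ R × R where
  toFun ij := (ij.1 + x₂ * ij.2, ij.2 + x₁ * ij.1)
  map_zero' := by simp
  map_add' u v := by ext <;> simp only [Prod.fst_add, Prod.snd_add] <;> ring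

theorem shearG2_injective {R : Type*} [CommRing R] [NoZeroDivisors R] {x₁ x₂ : R}
    (hx : x₁ * x₂ ≠ 1) : Function.Injective (shearG2 x₁ x₂) := by
  rintro ⟨i, j⟩ ⟨i', j'⟩ h
  obtain ⟨h₁, h₂⟩ := Prod.ext_iff.mp h
  change i + x₂ * j = i' + x₂ * j' at h₁
  change j + x₁ * i = j' + x₁ * i' at h₂
  have hdet : (1 - x₁ * x₂) * (j - j') = 0 := by linear_combination h₂ - x₁ * h₁
  have hj : j = j' := sub_eq_zero.mp ((mul_eq_zero.mp hdet).resolve_left (sub_ne_zero.mpr hx.symm))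
  subst hj
  exact Prod.ext (add_right_cancel h₁) rfl

def pairEmbedding {K F : Type*} [CommRing K] [CommRing F] (ρ : K →+* F) (α : F) : K × K →+ F where
  toFun ab := ρ ab.1 * α + ρ ab.2
  map_zero' := by simp
  map_add' u v := by simp only [Prod.fst_add, Prod.snd_add, map_add]; ring

theorem pairEmbedding_injective {K F : Type*} [Field K] [Field F] (ρ : K →+* F) {α : F}
    (hα : α ∉ ρ.range) : Function.Injective (pairEmbedding ρ α) := by
  rw [injective_iff_map_eq_zero]
  rintro ⟨a, b⟩ h
  change ρ a * α + ρ b = 0 at h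
  obtain rfl : a = 0 := by
    by_contra ha
    refine hα ⟨-b / a, ?_⟩
    rw [map_div₀, map_neg, eq_comm, eq_div_iff ((map_ne_zero ρ).mpr ha)]
    linear_combination h
  obtain rfl : b = 0 := ρ.injective (by simpa using h)
  rfl

theorem notMem_range_of_forall_eq_pow {K F : Type*} [Field K] [Fintype K] [Field F] [Fintype F]
    (ρ : K →+* F) (hcard : Fintype.card K < Fintype.card F) {α : F}
    (hα : ∀ y : F, y ≠ 0 → ∃ k : ℕ, α ^ k = y) : α ∉ ρ.range := by
  rintro ⟨c, rfl⟩
  have hρ : Function.Surjective ρ := by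
    intro y
    by_cases hy : y = 0
    · exact ⟨0, by rw [hy, map_zero]⟩
    · obtain ⟨k, rfl⟩ := hα y hy
      exact ⟨c ^ k, map_pow ρ c k⟩
  exact (Fintype.card_le_of_surjective ρ hρ).not_gt hcard

theorem G2_welch_periodicCostas_general
    (p : ℕ) (hp : p.Prime)
    (F : Type*) [Field F] [Fintype F] (hF : Fintype.card F = p ^ 2) [CharP F p]
    (α : F)
    (f : F → ZMod (p ^ 2 - 1))
    (hf : ∀ y : F, y ≠ 0 → α ^ (f y).val = y)
    (x₁ x₂ : ZMod p) (hx : x₁ * x₂ ≠ 1) :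
    PeriodicCostas2 p (p ^ 2 - 1) (fun ij =>
      f ((ZMod.castHom (dvd_refl p) F (ij.1 + x₂ * ij.2)) * α +
         (ZMod.castHom (dvd_refl p) F (ij.2 + x₁ * ij.1)))) := by
  have : Fact p.Prime := ⟨hp⟩
  have hp2 : p < p ^ 2 := by nlinarith [hp.two_le]
  have : NeZero (p ^ 2 - 1) := ⟨Nat.sub_ne_zero_of_lt (hp.one_lt.trans hp2)⟩
  set ρ := ZMod.castHom (dvd_refl p) F
  have hαρ : α ∉ ρ.range := notMem_range_of_forall_eq_pow ρ (by rwa [ZMod.card, hF])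
    fun y hy => ⟨_, hf y hy⟩
  have hα0 : α ≠ 0 := fun h => hαρ ⟨0, by rw [h, map_zero]⟩
  have hαn : α ^ (p ^ 2 - 1) = 1 := hF ▸ FiniteField.pow_card_sub_one_eq_one α hα0
  exact periodicCostas2_dlog_comp hαn hf ((pairEmbedding ρ α).comp (shearG2 x₁ x₂))
    ((pairEmbedding_injective ρ hαρ).comp (shearG2_injective hx))

/-- Applying the row-and-column shear `G2` with parameters `x₁, x₂` to the
three-dimensional periodic Welch Costas array over `ℤ_p × ℤ_p` yields an array
with the periodic Costas property. -/
theorem G2_welch_periodicCostas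
    (p : ℕ) (hp : p.Prime)
    (F : Type*) [Field F] [Fintype F] (hF : Fintype.card F = p ^ 2) [CharP F p]
    (α : F) (hα : ∀ y : F, y ≠ 0 → ∃ k : ℕ, α ^ k = y)
    (f : F → ZMod (p ^ 2 - 1))
    (hf : ∀ y : F, y ≠ 0 → α ^ (f y).val = y)
    (x₁ x₂ : ZMod p) (hx : x₁ * x₂ ≠ 1) :
    PeriodicCostas2 p (p ^ 2 - 1) (fun ij =>
      f ((ZMod.castHom (dvd_refl p) F (ij.1 + x₂ * ij.2)) * α +
         (ZMod.castHom (dvd_refl p) F (ij.2 + x₁ * ij.1)))) :=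
  G2_welch_periodicCostas_general p hp F hF α f hf x₁ x₂ hx
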